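/- Let H₁, H₂ be nonzero complex Hilbert spaces and let T ∈ B(H₂, H₁) with ‖T‖ ≤ 1. The Hilbert T₂-module H₁ ⊕ H₂ given by π_{(H₁,H₂,T)} is a semigenerator if and only if the range T(H₂) is not dense in H₁. -/

import Mathlib

/-!
Both directions run through the characters `M ↦ M₀₀` and `M ↦ M₁₁` of `T₂` and rank-one module
maps. If `ζ ≠ 0` is orthogonal to the range of `T`, then `x ↦ ⟪ζ, x₁⟫` intertwines
`π_{(H₁,H₂,T)}` with the first character, and for any `η` the functional `x ↦ ⟪η, x₂⟫`
intertwines it with the second. A nonzero Hilbert `T₂`-module `K` contains an eigenvector for one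
of the two characters: `π_K(E₁₁)k` if `π_K(E₁₁) ≠ 0`; otherwise `π_K(E₂₂) ≠ 0` because
`E₁₁ + E₂₂ = 1` and `π_K ≠ 0`, and `π_K(E₂₂)k` is an eigenvector since
`π_K(E₁₂) = π_K(E₁₁E₁₂) = 0`. Conversely, let `T₂` act on `H₁` through the first character. A
module map `V` into it satisfies `V(ζ, η) = V(ζ, 0)` (apply `E₁₁`) and
`V(Tη, 0) = V(E₁₂(0, η)) = 0`, so `V = 0` when the range of `T` is dense.
-/

set_option synthInstance.maxHeartbeats 1000000
set_option maxHeartbeats 2000000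

noncomputable section

open Filter

open scoped ENNReal Matrix.Norms.L2Operator

variable (A : Type) [NonUnitalNormedRing A] [NormedSpace ℂ A]

/-- A Hilbert `A`-module structure on the Hilbert space `K`: a contractive algebra
homomorphism `π : A → B(K)` which is nondegenerate, i.e. the linear span of
`{π a x : a ∈ A, x ∈ K}` is dense in `K`. -/
def IsHilbertRep {K : Type} [NormedAddCommGroup K] [InnerProductSpace ℂ K] [CompleteSpace K]
    (π : A →ₙₐ[ℂ] (K →L[ℂ] K)) : Prop :=
  (∀ a : A, ‖π a‖ ≤ ‖a‖) ∧
  Dense ((Submodule.span ℂ {x : K | ∃ (a : A) (y : K), π a y = x} : Submodule ℂ K) : Set K)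

/-- A bounded `A`-module map between Hilbert `A`-modules. -/
def IsModuleMap {K L : Type} [NormedAddCommGroup K] [InnerProductSpace ℂ K]
    [NormedAddCommGroup L] [InnerProductSpace ℂ L]
    (πK : A →ₙₐ[ℂ] (K →L[ℂ] K)) (πL : A →ₙₐ[ℂ] (L →L[ℂ] L)) (T : K →L[ℂ] L) : Prop :=
  ∀ (a : A) (x : K), T (πK a x) = πL a (T x)

/-- `H` is a semigenerator: for every nonzero Hilbert `A`-module `K` there is a nonzero
bounded `A`-module map `H → K`. -/
def IsSemigenerator {H : Type} [NormedAddCommGroup H] [InnerProductSpace ℂ H] [CompleteSpace H]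
    (πH : A →ₙₐ[ℂ] (H →L[ℂ] H)) : Prop :=
  ∀ (K : Type) [NormedAddCommGroup K] [InnerProductSpace ℂ K] [CompleteSpace K],
    ∀ (πK : A →ₙₐ[ℂ] (K →L[ℂ] K)), IsHilbertRep A πK → Nontrivial K →
      ∃ V : H →L[ℂ] K, IsModuleMap A πH πK V ∧ V ≠ 0

/-- The algebra of upper triangular `2 × 2` complex matrices, normed as operators
on the Euclidean space `ℂ²` (the `L²` operator norm). -/
def T2 : Subalgebra ℂ (Matrix (Fin 2) (Fin 2) ℂ) where
  carrier := {M | M 1 0 = 0}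
  mul_mem' := by
    intro a b ha hb
    simp only [Set.mem_setOf_eq] at *
    simp [Matrix.mul_apply, Fin.sum_univ_two, ha, hb]
  add_mem' := by
    intro a b ha hb
    simp only [Set.mem_setOf_eq] at *
    simp [ha, hb]
  algebraMap_mem' := by
    intro c
    simp [Matrix.algebraMap_eq_diagonal]

/-- The operator `(ζ, η) ↦ (a • ζ + b • (T η), c • η)` on `H₁ × H₂`. -/
def blockOp {H₁ H₂ : Type} [NormedAddCommGroup H₁] [InnerProductSpace ℂ H₁]
    [NormedAddCommGroup H₂] [InnerProductSpace ℂ H₂]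
    (T : H₂ →L[ℂ] H₁) (a b c : ℂ) : (H₁ × H₂) →L[ℂ] (H₁ × H₂) :=
  (a • ContinuousLinearMap.fst ℂ H₁ H₂ +
    b • T.comp (ContinuousLinearMap.snd ℂ H₁ H₂)).prod
    (c • ContinuousLinearMap.snd ℂ H₁ H₂)

variable {H₁ H₂ : Type} [NormedAddCommGroup H₁] [InnerProductSpace ℂ H₁]
  [NormedAddCommGroup H₂] [InnerProductSpace ℂ H₂]

theorem blockOp_apply (T : H₂ →L[ℂ] H₁) (a b c : ℂ) (x : H₁ × H₂) :
    blockOp T a b c x = (a • x.1 + b • T x.2, c • x.2) := rfl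

theorem blockOp_mul (T : H₂ →L[ℂ] H₁) (a b c a' b' c' : ℂ) :
    (blockOp T a b c).comp (blockOp T a' b' c') =
      blockOp T (a * a') (a * b' + b * c') (c * c') := by
  refine ContinuousLinearMap.ext fun x => Prod.ext ?_ ?_
  · simp [blockOp_apply, smul_smul, smul_add, add_smul]
    abel
  · simp [blockOp_apply, smul_smul]

theorem blockOp_add (T : H₂ →L[ℂ] H₁) (a b c a' b' c' : ℂ) :
    blockOp T (a + a') (b + b') (c + c') = blockOp T a b c + blockOp T a' b' c' := by
  refine ContinuousLinearMap.ext fun x => Prod.ext ?_ ?_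
  · simp [blockOp_apply, add_smul]
    abel
  · simp [blockOp_apply, add_smul]

theorem blockOp_smul (T : H₂ →L[ℂ] H₁) (s a b c : ℂ) :
    blockOp T (s * a) (s * b) (s * c) = s • blockOp T a b c := by
  refine ContinuousLinearMap.ext fun x => Prod.ext ?_ ?_
  · simp [blockOp_apply, smul_smul, smul_add]
  · simp [blockOp_apply, smul_smul]

theorem blockOp_zero (T : H₂ →L[ℂ] H₁) : blockOp T 0 0 0 = 0 := by
  refine ContinuousLinearMap.ext fun x => Prod.ext ?_ ?_ <;> simp [blockOp_apply]

/-- Conjugation of an operator on `H₁ × H₂` to the `L²`-direct sum `WithLp 2 (H₁ × H₂)`. -/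
def prodL2Conj (X : (H₁ × H₂) →L[ℂ] (H₁ × H₂)) :
    WithLp 2 (H₁ × H₂) →L[ℂ] WithLp 2 (H₁ × H₂) :=
  ((WithLp.prodContinuousLinearEquiv 2 ℂ H₁ H₂).symm.toContinuousLinearMap.comp X).comp
    (WithLp.prodContinuousLinearEquiv 2 ℂ H₁ H₂).toContinuousLinearMap

theorem prodL2Conj_add (X Y : (H₁ × H₂) →L[ℂ] (H₁ × H₂)) :
    prodL2Conj (X + Y) = prodL2Conj X + prodL2Conj Y := by
  unfold prodL2Conj
  rw [ContinuousLinearMap.comp_add, ContinuousLinearMap.add_comp]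

theorem prodL2Conj_smul (s : ℂ) (X : (H₁ × H₂) →L[ℂ] (H₁ × H₂)) :
    prodL2Conj (s • X) = s • prodL2Conj X := by
  unfold prodL2Conj
  rw [ContinuousLinearMap.comp_smul, ContinuousLinearMap.smul_comp]

theorem prodL2Conj_zero : prodL2Conj (0 : (H₁ × H₂) →L[ℂ] (H₁ × H₂)) = 0 := by
  unfold prodL2Conj
  rw [ContinuousLinearMap.comp_zero, ContinuousLinearMap.zero_comp]

theorem prodL2Conj_mul (X Y : (H₁ × H₂) →L[ℂ] (H₁ × H₂)) :
    prodL2Conj X * prodL2Conj Y = prodL2Conj (X.comp Y) := by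
  ext x <;> simp [prodL2Conj, ContinuousLinearMap.mul_apply]

/-- The representation `π_{(H₁,H₂,T)}` of `T2` on the Hilbert space direct sum `H₁ ⊕ H₂`
determined by a contraction `T : H₂ → H₁`: the upper triangular matrix `[[a, b], [0, c]]`
acts by `(ζ, η) ↦ (a ζ + b (T η), c η)`. -/
def triRep (T : H₂ →L[ℂ] H₁) :
    ↥T2 →ₙₐ[ℂ] (WithLp 2 (H₁ × H₂) →L[ℂ] WithLp 2 (H₁ × H₂)) where
  toFun M := prodL2Conj (blockOp T ((M : Matrix (Fin 2) (Fin 2) ℂ) 0 0)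
    ((M : Matrix (Fin 2) (Fin 2) ℂ) 0 1) ((M : Matrix (Fin 2) (Fin 2) ℂ) 1 1))
  map_add' M N := by
    have h : ((M + N : ↥T2) : Matrix (Fin 2) (Fin 2) ℂ)
        = (M : Matrix (Fin 2) (Fin 2) ℂ) + (N : Matrix (Fin 2) (Fin 2) ℂ) := rfl
    simp only [h, Matrix.add_apply, blockOp_add, prodL2Conj_add]
  map_smul' s M := by
    have h : ((s • M : ↥T2) : Matrix (Fin 2) (Fin 2) ℂ)
        = s • (M : Matrix (Fin 2) (Fin 2) ℂ) := rfl
    simp only [h, Matrix.smul_apply, smul_eq_mul, blockOp_smul, prodL2Conj_smul,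
      RingHom.id_apply, MonoidHom.id_apply]
  map_zero' := by
    have h : ((0 : ↥T2) : Matrix (Fin 2) (Fin 2) ℂ) = 0 := rfl
    simp only [h, Matrix.zero_apply, blockOp_zero, prodL2Conj_zero]
  map_mul' M N := by
    have hM : (M : Matrix (Fin 2) (Fin 2) ℂ) 1 0 = 0 := M.2
    have hN : (N : Matrix (Fin 2) (Fin 2) ℂ) 1 0 = 0 := N.2
    have hMN : ((M * N : ↥T2) : Matrix (Fin 2) (Fin 2) ℂ)
        = (M : Matrix (Fin 2) (Fin 2) ℂ) * (N : Matrix (Fin 2) (Fin 2) ℂ) := rfl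
    have e00 : ((M * N : ↥T2) : Matrix (Fin 2) (Fin 2) ℂ) 0 0
        = (M : Matrix (Fin 2) (Fin 2) ℂ) 0 0 * (N : Matrix (Fin 2) (Fin 2) ℂ) 0 0 := by
      simp [hMN, Matrix.mul_apply, Fin.sum_univ_two, hN]
    have e01 : ((M * N : ↥T2) : Matrix (Fin 2) (Fin 2) ℂ) 0 1
        = (M : Matrix (Fin 2) (Fin 2) ℂ) 0 0 * (N : Matrix (Fin 2) (Fin 2) ℂ) 0 1
          + (M : Matrix (Fin 2) (Fin 2) ℂ) 0 1 * (N : Matrix (Fin 2) (Fin 2) ℂ) 1 1 := by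
      simp [hMN, Matrix.mul_apply, Fin.sum_univ_two]
    have e11 : ((M * N : ↥T2) : Matrix (Fin 2) (Fin 2) ℂ) 1 1
        = (M : Matrix (Fin 2) (Fin 2) ℂ) 1 1 * (N : Matrix (Fin 2) (Fin 2) ℂ) 1 1 := by
      simp [hMN, Matrix.mul_apply, Fin.sum_univ_two, hM]
    simp only [e00, e01, e11, ← blockOp_mul, ← prodL2Conj_mul]

theorem Matrix.norm_apply_le_l2_opNorm {𝕜 m n : Type} [RCLike 𝕜] [Fintype m] [Fintype n]
    [DecidableEq n] (A : Matrix m n 𝕜) (i : m) (j : n) : ‖A i j‖ ≤ ‖A‖ :=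
  calc ‖A i j‖ = ‖(WithLp.toLp 2 (A.col j) : EuclideanSpace 𝕜 m) i‖ := rfl
    _ ≤ ‖(WithLp.toLp 2 (A.col j) : EuclideanSpace 𝕜 m)‖ := PiLp.norm_apply_le _ i
    _ ≤ ‖A‖ := by simpa using A.l2_opNorm_mulVec (EuclideanSpace.single j 1)

section Representations

variable {A : Type} [NonUnitalNormedRing A] [NormedSpace ℂ A]
  {H K : Type} [NormedAddCommGroup H] [InnerProductSpace ℂ H]
  [NormedAddCommGroup K] [InnerProductSpace ℂ K]

theorem IsHilbertRep.ne_zero [CompleteSpace K] [Nontrivial K] {π : A →ₙₐ[ℂ] (K →L[ℂ] K)}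
    (hπ : IsHilbertRep A π) : π ≠ 0 := by
  rintro rfl
  have hspan : Submodule.span ℂ {x : K | ∃ (a : A) (y : K), (0 : A →ₙₐ[ℂ] (K →L[ℂ] K)) a y = x}
      = ⊥ := by
    simp
  have hdense := hπ.2
  rw [hspan, Submodule.bot_coe, dense_iff_closure_eq, closure_singleton] at hdense
  obtain ⟨x, hx⟩ := exists_ne (0 : K)
  exact hx (hdense ▸ Set.mem_univ x : x ∈ ({0} : Set K))

theorem isModuleMap_smulRight {πH : A →ₙₐ[ℂ] (H →L[ℂ] H)} {πK : A →ₙₐ[ℂ] (K →L[ℂ] K)}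
    (χ : A → ℂ) {φ : H →L[ℂ] ℂ} {v : K} (hφ : ∀ a x, φ (πH a x) = χ a * φ x)
    (hv : ∀ a, πK a v = χ a • v) : IsModuleMap A πH πK (φ.smulRight v) := by
  intro a x
  simp [hφ, hv, smul_smul, mul_comm]

theorem ContinuousLinearMap.smulRight_ne_zero {φ : H →L[ℂ] ℂ} {v : K} {x : H} (hx : φ x ≠ 0)
    (hv : v ≠ 0) : φ.smulRight v ≠ 0 := fun h => by
  simpa [hx, hv] using DFunLike.congr_fun h x

variable (K) in
def scalarRep (χ : A →ₙₐ[ℂ] ℂ) : A →ₙₐ[ℂ] (K →L[ℂ] K) :=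
  (Algebra.ofId ℂ (K →L[ℂ] K)).toNonUnitalAlgHom.comp χ

@[simp]
theorem scalarRep_apply (χ : A →ₙₐ[ℂ] ℂ) (a : A) (x : K) : scalarRep K χ a x = χ a • x := rfl

theorem isHilbertRep_scalarRep [CompleteSpace K] {χ : A →ₙₐ[ℂ] ℂ} (hχ : ∀ a, ‖χ a‖ ≤ ‖a‖)
    {a₀ : A} (ha₀ : χ a₀ ≠ 0) : IsHilbertRep A (scalarRep K χ) := by
  refine ⟨fun a => ContinuousLinearMap.opNorm_le_bound _ (norm_nonneg a) fun x => ?_, ?_⟩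
  · simpa [norm_smul] using mul_le_mul_of_nonneg_right (hχ a) (norm_nonneg x)
  · have hall : {x : K | ∃ (a : A) (y : K), scalarRep K χ a y = x} = Set.univ :=
      Set.eq_univ_of_forall fun x => ⟨a₀, (χ a₀)⁻¹ • x, by simp [smul_smul, ha₀]⟩
    simp only [hall, Submodule.span_univ, Submodule.top_coe, dense_univ]

end Representations

theorem ContinuousLinearMap.exists_ne_zero_forall_inner_apply_eq_zero {E F : Type}
    [NormedAddCommGroup E] [InnerProductSpace ℂ E] [NormedAddCommGroup F] [InnerProductSpace ℂ F]
    [CompleteSpace F] (T : E →L[ℂ] F) (hT : ¬Dense (Set.range T)) :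
    ∃ ζ : F, ζ ≠ 0 ∧ ∀ x, inner ℂ ζ (T x) = 0 := by
  have hperp : (LinearMap.range T.toLinearMap)ᗮ ≠ ⊥ := fun h => hT <| by
    simpa [LinearMap.coe_range] using Submodule.dense_iff_topologicalClosure_eq_top.2
      (Submodule.topologicalClosure_eq_top_iff.2 h)
  obtain ⟨ζ, hζ, hζ0⟩ := (Submodule.ne_bot_iff _).1 hperp
  exact ⟨ζ, hζ0, fun x => Submodule.inner_left_of_mem_orthogonal (LinearMap.mem_range_self _ x) hζ⟩

namespace T2

def E11 : ↥T2 := ⟨Matrix.single 0 0 1, by show _ = (0 : ℂ); simp⟩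

def E12 : ↥T2 := ⟨Matrix.single 0 1 1, by show _ = (0 : ℂ); simp⟩

def E22 : ↥T2 := ⟨Matrix.single 1 1 1, by show _ = (0 : ℂ); simp⟩

@[simp] theorem coe_apply_one_zero (M : ↥T2) : (M : Matrix (Fin 2) (Fin 2) ℂ) 1 0 = 0 := M.2

@[simp] theorem coe_E11 : (E11 : Matrix (Fin 2) (Fin 2) ℂ) = Matrix.single 0 0 1 := rfl

@[simp] theorem coe_E12 : (E12 : Matrix (Fin 2) (Fin 2) ℂ) = Matrix.single 0 1 1 := rfl

@[simp] theorem coe_E22 : (E22 : Matrix (Fin 2) (Fin 2) ℂ) = Matrix.single 1 1 1 := rfl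

theorem E11_add_E22 : E11 + E22 = 1 := by
  ext i j
  fin_cases i <;> fin_cases j <;> simp

theorem E11_mul_E12 : E11 * E12 = E12 := by
  ext i j
  fin_cases i <;> fin_cases j <;> simp

theorem mul_E11 (M : ↥T2) : M * E11 = (M : Matrix (Fin 2) (Fin 2) ℂ) 0 0 • E11 := by
  ext i j
  fin_cases i <;> fin_cases j <;> simp

theorem mul_E22 (M : ↥T2) :
    M * E22 =
      (M : Matrix (Fin 2) (Fin 2) ℂ) 0 1 • E12 + (M : Matrix (Fin 2) (Fin 2) ℂ) 1 1 • E22 := by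
  ext i j
  fin_cases i <;> fin_cases j <;> simp

def diagChar (i : Fin 2) : ↥T2 →ₙₐ[ℂ] ℂ where
  toFun M := (M : Matrix (Fin 2) (Fin 2) ℂ) i i
  map_smul' _ _ := rfl
  map_zero' := rfl
  map_add' _ _ := rfl
  map_mul' M N := by
    fin_cases i <;> simp [Matrix.mul_apply, Fin.sum_univ_two]

@[simp] theorem diagChar_apply (i : Fin 2) (M : ↥T2) :
    diagChar i M = (M : Matrix (Fin 2) (Fin 2) ℂ) i i := rfl

theorem norm_diagChar_le (i : Fin 2) (M : ↥T2) : ‖diagChar i M‖ ≤ ‖M‖ :=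
  Matrix.norm_apply_le_l2_opNorm (M : Matrix (Fin 2) (Fin 2) ℂ) i i

variable {K : Type} [NormedAddCommGroup K] [InnerProductSpace ℂ K]

theorem apply_apply_E11 (π : ↥T2 →ₙₐ[ℂ] (K →L[ℂ] K)) (M : ↥T2) (k : K) :
    π M (π E11 k) = diagChar 0 M • π E11 k := by
  rw [← mul_apply_eq_comp, ← map_mul, mul_E11, map_smul]
  rfl

theorem apply_apply_E22_of_E11_eq_zero {π : ↥T2 →ₙₐ[ℂ] (K →L[ℂ] K)} (h : π E11 = 0) (M : ↥T2)
    (k : K) :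
    π M (π E22 k) = diagChar 1 M • π E22 k := by
  have hE12 : π E12 = 0 := by rw [← E11_mul_E12, map_mul, h, zero_mul]
  rw [← mul_apply_eq_comp, ← map_mul, mul_E22]
  simp [hE12]

theorem E22_ne_zero_of_E11_eq_zero {π : ↥T2 →ₙₐ[ℂ] (K →L[ℂ] K)} (hπ : π ≠ 0) (h : π E11 = 0) :
    π E22 ≠ 0 := fun h' => hπ <| NonUnitalAlgHom.ext fun M => by
  rw [← mul_one M, ← E11_add_E22, mul_add, map_add, map_mul, map_mul, h, h']
  simp

end T2

section TriRep

variable {T : H₂ →L[ℂ] H₁}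

theorem triRep_apply (M : ↥T2) (x : WithLp 2 (H₁ × H₂)) :
    triRep T M x = WithLp.toLp 2
      ((M : Matrix (Fin 2) (Fin 2) ℂ) 0 0 • x.fst + (M : Matrix (Fin 2) (Fin 2) ℂ) 0 1 • T x.snd,
        (M : Matrix (Fin 2) (Fin 2) ℂ) 1 1 • x.snd) :=
  rfl

theorem inner_fst_triRep {ζ : H₁} (hζ : ∀ η, inner ℂ ζ (T η) = 0) (M : ↥T2)
    (x : WithLp 2 (H₁ × H₂)) :
    inner ℂ ζ (triRep T M x).fst = T2.diagChar 0 M * inner ℂ ζ x.fst := by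
  simp [triRep_apply, hζ]

theorem inner_snd_triRep (T : H₂ →L[ℂ] H₁) (η : H₂) (M : ↥T2) (x : WithLp 2 (H₁ × H₂)) :
    inner ℂ η (triRep T M x).snd = T2.diagChar 1 M * inner ℂ η x.snd := by
  simp [triRep_apply]

theorem eq_zero_of_isModuleMap_triRep {K : Type} [NormedAddCommGroup K] [InnerProductSpace ℂ K]
    (hT : Dense (Set.range T)) {V : WithLp 2 (H₁ × H₂) →L[ℂ] K}
    (hV : IsModuleMap ↥T2 (triRep T) (scalarRep K (T2.diagChar 0)) V) : V = 0 := by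
  have hfst (x : WithLp 2 (H₁ × H₂)) : V x = V (WithLp.toLp 2 (x.fst, 0)) := by
    simpa [triRep_apply] using (hV T2.E11 x).symm
  have hrange (η : H₂) : V (WithLp.toLp 2 (T η, 0)) = 0 := by
    simpa [triRep_apply] using hV T2.E12 (WithLp.toLp 2 (0, η))
  have hinl : (fun ζ : H₁ => V (WithLp.toLp 2 (ζ, 0))) = 0 :=
    Continuous.ext_on hT (by fun_prop) continuous_const (by rintro _ ⟨η, rfl⟩; exact hrange η)
  ext x
  rw [hfst]
  exact congrFun hinl x.fst

theorem isSemigenerator_triRep_of_not_dense [CompleteSpace H₁] [CompleteSpace H₂]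
    [Nontrivial H₂] (hT : ¬Dense (Set.range T)) : IsSemigenerator ↥T2 (triRep T) := by
  intro K _ _ _ πK hπK _
  by_cases h11 : πK T2.E11 = 0
  · obtain ⟨k, hk⟩ := DFunLike.ne_iff.1 (T2.E22_ne_zero_of_E11_eq_zero hπK.ne_zero h11)
    obtain ⟨η, hη⟩ := exists_ne (0 : H₂)
    exact ⟨(innerSL ℂ η ∘L WithLp.sndL 2 ℂ H₁ H₂).smulRight (πK T2.E22 k),
      isModuleMap_smulRight _ (inner_snd_triRep T η)
        (fun M => T2.apply_apply_E22_of_E11_eq_zero h11 M k),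
      ContinuousLinearMap.smulRight_ne_zero (x := WithLp.toLp 2 (0, η)) (by simpa using hη)
        (by simpa using hk)⟩
  · obtain ⟨k, hk⟩ := DFunLike.ne_iff.1 h11
    obtain ⟨ζ, hζ0, hζ⟩ := T.exists_ne_zero_forall_inner_apply_eq_zero hT
    exact ⟨(innerSL ℂ ζ ∘L WithLp.fstL 2 ℂ H₁ H₂).smulRight (πK T2.E11 k),
      isModuleMap_smulRight _ (inner_fst_triRep hζ) (fun M => T2.apply_apply_E11 πK M k),
      ContinuousLinearMap.smulRight_ne_zero (x := WithLp.toLp 2 (ζ, 0)) (by simpa using hζ0)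
        (by simpa using hk)⟩

end TriRep

theorem triRep_semigenerator_iff_general [CompleteSpace H₁] [CompleteSpace H₂]
    [Nontrivial H₁] [Nontrivial H₂]
    (T : H₂ →L[ℂ] H₁) :
    IsSemigenerator ↥T2 (triRep T) ↔ ¬Dense (Set.range ⇑T : Set H₁) := by
  refine ⟨fun hsg hdense => ?_, isSemigenerator_triRep_of_not_dense⟩
  obtain ⟨V, hV, hV0⟩ := hsg H₁ (scalarRep H₁ (T2.diagChar 0))
    (isHilbertRep_scalarRep (T2.norm_diagChar_le 0) (a₀ := T2.E11) (by simp)) inferInstance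
  exact hV0 (eq_zero_of_isModuleMap_triRep hdense hV)

/-- The Hilbert `T2`-module `H₁ ⊕ H₂` given by `π_(H₁,H₂,T)` is a semigenerator if and only if the range of `T` is not dense in `H₁`. -/
theorem triRep_semigenerator_iff [CompleteSpace H₁] [CompleteSpace H₂]
    [Nontrivial H₁] [Nontrivial H₂]
    (T : H₂ →L[ℂ] H₁) (hT : ‖T‖ ≤ 1) :
    IsSemigenerator ↥T2 (triRep T) ↔ ¬Dense (Set.range ⇑T : Set H₁) :=
  triRep_semigenerator_iff_general T
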